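/- Let G be a finite simple graph with vertex set V(G) = {v_1, …, v_n} and let 1 < k < n. Suppose that: (1) N[v_1] ∪ … ∪ N[v_k] = V(G); (2) N[v_1] ∩ (N[v_2] ∪ … ∪ N[v_k]) = ∅; (3) |d(v_i) − d(v_j)| ≠ 1 for every i ∈ {1,…,k} and every j ∈ {1,…,n} with j ≠ i; (4) v_1 is the unique vertex of G of degree d(v_1); (5) for every i ∈ {2,…,k}, every vertex of G having degree d(v_i) lies in {v_2,…,v_k}. Let G' be a finite simple graph with vertex set V(G') = {v'_1, …, v'_n} such that for every j ∈ {1,…,n} the vertex-deleted subgraph G − v_j is isomorphic to G' − v'_j. Then every isomorphism f_1 : G − v_1 → G' − v'_1 maps the open neighborhood N(v_1) of v_1 in G onto the open neighborhood N(v'_1) of v'_1 in G'. -/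

import Mathlib

/-!
Deleting a vertex `z` changes the degree of every other vertex by the indicator of its adjacency
to `z`, and removes `d(z)` edges. Summing over `z`, the isomorphisms `G - z ≅ G' - z` force
`e(G) = e(G')` (as `n ≥ 3`) and then `d_G = d_{G'}`, so every such isomorphism moves each vertex
to one whose degree differs by at most one. By the degree gaps (3)-(5) it therefore maps
`{v_1, …, v_k}` and `{v_2, …, v_k}` to themselves.

If some `u ∈ N(v_1)` had `f_1 u ∉ N(v'_1)`, then `f_1 u` would have degree `d(u) - 1`, so
`f_1 u ≠ u`. Transporting the covering (1) along `G - u ≅ G' - u`, the vertex `f_1 u` lies in a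
closed neighbourhood `N'[v_i]`, and this can only be an edge to some `v_i` with `2 ≤ i ≤ k`.
Pulling that edge back along `f_1` makes `u` adjacent to some `v_j`, `2 ≤ j ≤ k`, against (2).
So `f_1` maps `N(v_1)` into `N(v'_1)`, and both have `d(v_1)` elements.
-/

open Finset

namespace SimpleGraph

variable {V : Type*} [Fintype V] {G G' : SimpleGraph V} [DecidableRel G.Adj] [DecidableRel G'.Adj]

theorem image_neighborSet_eq_of_adj {v : V} (f : G.induce {v}ᶜ ≃g G'.induce {v}ᶜ)
    (hf : ∀ u : ({v}ᶜ : Set V), G.Adj v u → G'.Adj v (f u)) (hv : G.degree v = G'.degree v) :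
    (fun x ↦ (f x : V)) '' {x | (x : V) ∈ G.neighborSet v} = G'.neighborSet v := by
  refine Set.eq_of_subset_of_ncard_le ?_ (le_of_eq ?_) (Set.toFinite _)
  · rintro _ ⟨x, hx, rfl⟩
    exact hf x hx
  have hN : {x : ({v}ᶜ : Set V) | (x : V) ∈ G.neighborSet v}.ncard = (G.neighborSet v).ncard :=
    Set.ncard_preimage_of_injective_subset_range Subtype.val_injective
      (by rw [Subtype.range_coe]; exact fun w hw ↦ (G.ne_of_adj hw).symm)
  rw [Set.ncard_image_of_injective (f := fun x ↦ (f x : V)) _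
      (Subtype.val_injective.comp f.injective), hN]
  simp only [Set.ncard_eq_toFinset_card', Set.toFinset_card, card_neighborSet_eq_degree, hv]

variable (G) in
def IsDegreeSeparated (T : Set V) : Prop :=
  ∀ i ∈ T, ∀ j, |(G.degree i : ℤ) - G.degree j| ≤ 1 → j ∈ T

theorem isDegreeSeparated_of_abs_ne_one {T : Set V}
    (hgap : ∀ i ∈ T, ∀ j ≠ i, |(G.degree i : ℤ) - G.degree j| ≠ 1)
    (hclosed : ∀ i ∈ T, ∀ j, G.degree j = G.degree i → j ∈ T) :
    G.IsDegreeSeparated T := by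
  intro i hi j hj
  by_cases hji : j = i
  · exact hji ▸ hi
  refine hclosed i hi j ?_
  have hne := hgap i hi j hji
  rcases abs_cases ((G.degree i : ℤ) - G.degree j) with ⟨h, _⟩ | ⟨h, _⟩ <;> omega

variable [DecidableEq V]

theorem degree_induce_compl_singleton_add_ite (z : V) (x : ({z}ᶜ : Set V)) :
    (G.induce {z}ᶜ).degree x + (if G.Adj z x then 1 else 0) = G.degree x := by
  have herase :
      G.neighborFinset x ∩ ({z}ᶜ : Set V).toFinset = (G.neighborFinset x).erase z := by
    ext; simp [and_comm]
  rw [← card_neighborFinset_eq_degree, ← card_map, map_neighborFinset_induce, herase,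
    ← card_neighborFinset_eq_degree]
  split_ifs with h
  · exact card_erase_add_one (by simpa using h.symm)
  · rw [erase_eq_of_notMem (by simpa [adj_comm] using h), add_zero]

theorem degree_add_ite_eq_of_iso_induce {z : V} (g : G.induce {z}ᶜ ≃g G'.induce {z}ᶜ)
    (x : ({z}ᶜ : Set V)) :
    G.degree x + (if G'.Adj z (g x) then 1 else 0)
      = G'.degree (g x) + (if G.Adj z x then 1 else 0) := by
  rw [← degree_induce_compl_singleton_add_ite z x,
    ← degree_induce_compl_singleton_add_ite z (g x), g.degree_eq]
  ring

variable (G) in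
theorem card_edgeFinset_induce_compl_singleton_add_degree (z : V) :
    #(G.induce {z}ᶜ).edgeFinset + G.degree z = #G.edgeFinset := by
  rw [card_edgeFinset_induce_compl_singleton, card_edgeFinset_deleteIncidenceSet]
  exact Nat.sub_add_cancel (G.degree_le_card_edgeFinset z)

theorem degree_eq_of_forall_nonempty_iso_induce (hV : 3 ≤ Fintype.card V)
    (h : ∀ z, Nonempty (G.induce {z}ᶜ ≃g G'.induce {z}ᶜ)) (x : V) :
    G.degree x = G'.degree x := by
  have hz (z : V) : (G.degree z : ℤ) - G'.degree z = #G.edgeFinset - #G'.edgeFinset := by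
    obtain ⟨g⟩ := h z
    have hiso := g.card_edgeFinset_eq
    have hG := G.card_edgeFinset_induce_compl_singleton_add_degree z
    have hG' := G'.card_edgeFinset_induce_compl_singleton_add_degree z
    omega
  have hsum : ∑ z, ((G.degree z : ℤ) - G'.degree z)
      = 2 * ((#G.edgeFinset : ℤ) - #G'.edgeFinset) := by
    rw [sum_sub_distrib]
    push_cast [← Nat.cast_sum, sum_degrees_eq_twice_card_edges]
    ring
  rw [sum_congr rfl fun z _ ↦ hz z, sum_const, card_univ, nsmul_eq_mul] at hsum
  have hdiff : ((Fintype.card V : ℤ) - 2) * (#G.edgeFinset - #G'.edgeFinset) = 0 := by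
    linarith
  have hedges := (mul_eq_zero.1 hdiff).resolve_left (by omega)
  have hx := hz x
  omega

theorem abs_degree_sub_degree_apply_le_one (hdeg : ∀ x, G.degree x = G'.degree x) {z : V}
    (g : G.induce {z}ᶜ ≃g G'.induce {z}ᶜ) (x : ({z}ᶜ : Set V)) :
    |(G.degree x : ℤ) - G.degree (g x)| ≤ 1 := by
  have hx := degree_add_ite_eq_of_iso_induce g x
  rw [← hdeg] at hx
  rw [abs_le]
  split_ifs at hx <;> constructor <;> omega

theorem IsDegreeSeparated.coe_apply_mem_iff {T : Set V} (hT : G.IsDegreeSeparated T)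
    (hdeg : ∀ x, G.degree x = G'.degree x) {z : V} (g : G.induce {z}ᶜ ≃g G'.induce {z}ᶜ)
    (x : ({z}ᶜ : Set V)) :
    (g x : V) ∈ T ↔ (x : V) ∈ T := by
  have hx := abs_degree_sub_degree_apply_le_one hdeg g x
  exact ⟨fun h ↦ hT _ h _ (abs_sub_comm (G.degree x : ℤ) _ ▸ hx), fun h ↦ hT _ h _ hx⟩

theorem exists_mem_coe_apply_mem_insert_neighborSet {T : Set V} (hT : G.IsDegreeSeparated T)
    (hdeg : ∀ x, G.degree x = G'.degree x)
    (hcover : ⋃ i ∈ T, insert i (G.neighborSet i) = Set.univ) {u : V} (hu : u ∉ T)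
    (g : G.induce {u}ᶜ ≃g G'.induce {u}ᶜ) (x : ({u}ᶜ : Set V)) :
    ∃ i ∈ T, (g x : V) ∈ insert i (G'.neighborSet i) := by
  obtain ⟨i, hi, hx⟩ := Set.mem_iUnion₂.1 (hcover ▸ Set.mem_univ (x : V))
  have hiu : i ≠ u := by rintro rfl; exact hu hi
  refine ⟨g ⟨i, hiu⟩, (hT.coe_apply_mem_iff hdeg g _).2 hi, ?_⟩
  rcases hx with hx | hx
  · left
    rw [show x = ⟨i, hiu⟩ from Subtype.ext hx]
  · exact Or.inr (g.map_adj_iff.2 hx)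

theorem adj_coe_apply_of_adj {v : V} {K : Set V} (hdeg : ∀ x, G.degree x = G'.degree x)
    (hdel : ∀ z, Nonempty (G.induce {z}ᶜ ≃g G'.induce {z}ᶜ))
    (hK : G.IsDegreeSeparated K) (hvK : G.IsDegreeSeparated (insert v K))
    (hcover : ⋃ i ∈ insert v K, insert i (G.neighborSet i) = Set.univ)
    (hdisj : insert v (G.neighborSet v) ∩ ⋃ i ∈ K, insert i (G.neighborSet i) = ∅)
    (f : G.induce {v}ᶜ ≃g G'.induce {v}ᶜ) (u : ({v}ᶜ : Set V)) (hu : G.Adj v u) :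
    G'.Adj v (f u) := by
  have hfar : ∀ i ∈ K, (u : V) ∉ insert i (G.neighborSet i) := fun i hi h ↦
    Set.eq_empty_iff_forall_notMem.1 hdisj u
      ⟨Set.mem_insert_of_mem _ hu, Set.mem_biUnion hi h⟩
  have huK : (u : V) ∉ K := fun h ↦ hfar u h (Set.mem_insert _ _)
  have hv_notMem : v ∉ K := fun h ↦ hfar v h (Set.mem_insert_of_mem _ hu)
  by_contra hfu
  have hfuK : (f u : V) ∉ K := mt (hK.coe_apply_mem_iff hdeg f u).1 huK
  -- `f u` has lost the edge to `v` without gaining one, so its degree is `d(u) - 1`.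
  have hfu_ne : (f u : V) ≠ u := by
    have hfu_deg := degree_add_ite_eq_of_iso_induce f u
    rw [if_pos hu, if_neg hfu, ← hdeg] at hfu_deg
    intro h
    rw [h] at hfu_deg
    omega
  obtain ⟨g⟩ := hdel u
  obtain ⟨i, hi, hy⟩ := exists_mem_coe_apply_mem_insert_neighborSet hvK hdeg hcover
    (by rintro (h | h); exacts [u.2 h, huK h]) g (g.symm ⟨f u, hfu_ne⟩)
  rw [g.apply_symm_apply] at hy
  rcases hi with rfl | hiK
  · exact hy.elim (f u).2 hfu
  rcases hy with h | h
  · exact hfuK (h ▸ hiK)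
  -- Pulling the `G'`-edge from `i ∈ K` to `f u` back along `f` makes `u` adjacent to `K`.
  set w := f.symm ⟨i, fun h ↦ hv_notMem (h ▸ hiK)⟩ with hw
  have hfw : (f w : V) = i := by simp [hw]
  have hwK : (w : V) ∈ K := (hK.coe_apply_mem_iff hdeg f w).1 (hfw ▸ hiK)
  have hwu : G.Adj w u := f.map_adj_iff.1 (show G'.Adj (f w) (f u) from hfw ▸ h)
  exact hfar w hwK (Set.mem_insert_of_mem _ hwu)

end SimpleGraph

open SimpleGraph

/-- The vertices `v_j` and `v'_j` of the paper are both `⟨j - 1, _⟩ : Fin n`. -/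
theorem stmt_7 (n k : ℕ) (hk1 : 1 < k) (hkn : k < n)
    (G G' : SimpleGraph (Fin n)) [DecidableRel G.Adj] [DecidableRel G'.Adj]
    -- (1) N[v_1] ∪ … ∪ N[v_k] = V(G)
    (h1 : (⋃ i ∈ {i : Fin n | (i : ℕ) < k},
        insert i (G.neighborSet i)) = Set.univ)
    -- (2) N[v_1] ∩ (N[v_2] ∪ … ∪ N[v_k]) = ∅
    (h2 : insert (⟨0, by omega⟩ : Fin n) (G.neighborSet ⟨0, by omega⟩) ∩
        (⋃ i ∈ {i : Fin n | 0 < (i : ℕ) ∧ (i : ℕ) < k},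
          insert i (G.neighborSet i)) = ∅)
    -- (3) |d(v_i) − d(v_j)| ≠ 1 for i ∈ {1,…,k}, j ≠ i
    (h3 : ∀ i j : Fin n, (i : ℕ) < k → j ≠ i →
        |(G.degree i : ℤ) - (G.degree j : ℤ)| ≠ 1)
    -- (4) v_1 is the unique vertex of degree d(v_1)
    (h4 : ∀ w : Fin n, G.degree w = G.degree ⟨0, by omega⟩ → w = ⟨0, by omega⟩)
    -- (5) every vertex of degree d(v_i), i ∈ {2,…,k}, lies in {v_2,…,v_k}
    (h5 : ∀ i : Fin n, 0 < (i : ℕ) → (i : ℕ) < k →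
        ∀ w : Fin n, G.degree w = G.degree i → 0 < (w : ℕ) ∧ (w : ℕ) < k)
    -- G − v_j ≅ G' − v'_j for every j
    (hdel : ∀ j : Fin n,
        Nonempty (G.induce ({j}ᶜ : Set (Fin n)) ≃g G'.induce ({j}ᶜ : Set (Fin n)))) :
    ∀ f1 : G.induce ({(⟨0, by omega⟩ : Fin n)}ᶜ : Set (Fin n)) ≃g
           G'.induce ({(⟨0, by omega⟩ : Fin n)}ᶜ : Set (Fin n)),
      (fun x : ({(⟨0, by omega⟩ : Fin n)}ᶜ : Set (Fin n)) => ((f1 x : Fin n))) ''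
          {x | (x : Fin n) ∈ G.neighborSet ⟨0, by omega⟩} =
        G'.neighborSet (⟨0, by omega⟩ : Fin n) := by
  intro f1
  let K : Set (Fin n) := {i | 0 < (i : ℕ) ∧ (i : ℕ) < k}
  have hcenters : {i : Fin n | (i : ℕ) < k} = insert ⟨0, by omega⟩ K := by
    ext i
    simp only [Set.mem_ofPred_eq, Set.mem_insert_iff, Fin.ext_iff, K]
    omega
  have hdeg := degree_eq_of_forall_nonempty_iso_induce (by rw [Fintype.card_fin]; omega) hdel
  have hK : G.IsDegreeSeparated K :=
    isDegreeSeparated_of_abs_ne_one (fun i hi j hj ↦ h3 i j hi.2 hj) fun i hi ↦ h5 i hi.1 hi.2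
  have hvK : G.IsDegreeSeparated (insert ⟨0, by omega⟩ K) := by
    rw [← hcenters]
    refine isDegreeSeparated_of_abs_ne_one (fun i hi j hj ↦ h3 i j hi hj) fun i hi w hw ↦ ?_
    by_cases hi0 : (i : ℕ) = 0
    · have hi_eq : i = ⟨0, by omega⟩ := Fin.ext hi0
      rw [h4 w (hi_eq ▸ hw)]
      exact hi_eq ▸ hi
    · exact (h5 i (Nat.pos_of_ne_zero hi0) hi w hw).2
  rw [hcenters] at h1
  exact image_neighborSet_eq_of_adj f1 (adj_coe_apply_of_adj hdeg hdel hK hvK h1 h2 f1) (hdeg _)
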